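/- arXiv:2502.04616 — 5 statements merged into one kernel-verified Lean document; each statement's English description precedes it below -/
import Mathlib

section
/- Assume f : ℝ → ℝ is continuously differentiable and there is β > 0 with f(β) ≤ 0 ≤ f(−β); let κ ≥ max_{|x|≤β}|f′(x)|; assume 0 ≤ V(z) ≤ 1 for all z ∈ ℝ. Suppose the step ratios satisfy 0 < r_k < 1 + √2 for 2 ≤ k ≤ N, that the real parameter η satisfies r_k²/(1+2r_k) < η < 1 for all 2 ≤ k ≤ N, and that the step sizes satisfy τ_n ≤ ((1+2r_n)η − r_n²)/(η²(1+r_n)) · (1−η)/(κ + 4ε²h⁻²) for all 1 ≤ n ≤ N (with r_1 = 0). If ‖φ^0‖_∞ ≤ β, then the solution of the BDF2-sESAV-I scheme satisfies ‖φ^n‖_∞ ≤ β for all 1 ≤ n ≤ N. -/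
/-- Discrete Laplace operator on periodic grid functions. -/
noncomputable def lapH (M : ℕ) (h : ℝ) (v : ZMod M × ZMod M → ℝ) :
    ZMod M × ZMod M → ℝ :=
  fun p => (v (p.1 + 1, p.2) + v (p.1 - 1, p.2) + v (p.1, p.2 + 1) + v (p.1, p.2 - 1)
    - 4 * v p) / h ^ 2

/-- Discrete inner product on periodic grid functions. -/
noncomputable def ipH (M : ℕ) [NeZero M] (h : ℝ)
    (v w : ZMod M × ZMod M → ℝ) : ℝ :=
  h ^ 2 * ∑ p : ZMod M × ZMod M, v p * w p

/-- Discrete maximum norm of a periodic grid function. -/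
noncomputable def maxNorm (M : ℕ) [NeZero M] (v : ZMod M × ZMod M → ℝ) : ℝ :=
  Finset.univ.sup' ⟨(0, 0), Finset.mem_univ _⟩ fun p => |v p|

/-- E_{1h}[v] = h² Σ F(v(i,j)). -/
noncomputable def E1h (M : ℕ) [NeZero M] (h : ℝ) (F : ℝ → ℝ)
    (v : ZMod M × ZMod M → ℝ) : ℝ :=
  h ^ 2 * ∑ p : ZMod M × ZMod M, F (v p)

/-- g_h(v, w) = exp(w)/exp(E_{1h}[v]). -/
noncomputable def gh (M : ℕ) [NeZero M] (h : ℝ) (F : ℝ → ℝ)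
    (v : ZMod M × ZMod M → ℝ) (w : ℝ) : ℝ :=
  Real.exp w / Real.exp (E1h M h F v)

/-- Adjacent step ratio: r_k = τ_k/τ_{k−1} for k ≥ 2, and r_1 = 0. -/
noncomputable def ratio (τ : ℕ → ℝ) (k : ℕ) : ℝ :=
  if 2 ≤ k then τ k / τ (k - 1) else 0

/-- Variable-step BDF2 convolution kernels b_j^{(n)}. -/
noncomputable def bker (τ : ℕ → ℝ) (n j : ℕ) : ℝ :=
  if n = 1 then (if j = 0 then 1 / τ 1 else 0)
  else if j = 0 then (1 + 2 * ratio τ n) / (τ n * (1 + ratio τ n))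
  else if j = 1 then -(ratio τ n) ^ 2 / (τ n * (1 + ratio τ n))
  else 0

/-- Variable-step BDF2 operator D₂w^n = Σ_{k=1}^n b_{n−k}^{(n)}(w^k − w^{k−1}). -/
noncomputable def D2 (τ : ℕ → ℝ) (w : ℕ → ℝ) (n : ℕ) : ℝ :=
  ∑ k ∈ Finset.Icc 1 n, bker τ n (n - k) * (w k - w (k - 1))

/-- Recombined kernels d_k^{(n)}: d_0^{(n)} = b_0^{(n)},
d_k^{(n)} = η^{k−1}(b_0^{(n)}η + b_1^{(n)}) for k ≥ 1 (so d_1^{(1)} = η b_0^{(1)}). -/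
noncomputable def dker (τ : ℕ → ℝ) (η : ℝ) (n k : ℕ) : ℝ :=
  if k = 0 then bker τ n 0
  else η ^ (k - 1) * (bker τ n 0 * η + bker τ n 1)

/-- The BDF2-sESAV-I scheme: predictor equation (i), BDF2 equation (ii) and
auxiliary-variable equation (iii), for 1 ≤ n ≤ N, with R^0 = E_{1h}[φ^0]. -/
structure BDF2sESAVI (M : ℕ) [NeZero M] (h ε κ : ℝ) (f F V : ℝ → ℝ)
    (N : ℕ) (τ : ℕ → ℝ) (φ φhat : ℕ → ZMod M × ZMod M → ℝ) (R : ℕ → ℝ) : Prop where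
  init : R 0 = E1h M h F (φ 0)
  pred : ∀ n, 1 ≤ n → n ≤ N → ∀ p,
    (φhat n p - φ (n - 1) p) / τ n =
      ε ^ 2 * lapH M h (φhat n) p + f (φ (n - 1) p)
        - κ * (φhat n p - φ (n - 1) p)
  step : ∀ n, 1 ≤ n → n ≤ N → ∀ p,
    D2 τ (fun k => φ k p) n =
      ε ^ 2 * lapH M h (φ n) p
        + V (gh M h F (φhat n) (R (n - 1))) * f (φhat n p)
        - κ * (φ n p - V (gh M h F (φhat n) (R (n - 1))) * φhat n p)
  aux : ∀ n, 1 ≤ n → n ≤ N →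
    (R n - R (n - 1)) / τ n =
      - ipH M h
          (fun p => V (gh M h F (φhat n) (R (n - 1))) * f (φhat n p)
            - κ * (φ n p - V (gh M h F (φhat n) (R (n - 1))) * φhat n p))
          (fun p => (φ n p - φ (n - 1) p) / τ n)

/-!
Induction on `n`, carrying both `|φⁿ| ≤ β` and `|φⁿ - η φⁿ⁻¹| ≤ (1 - η) β`. Since `|f'| ≤ κ` on
`[-β, β]` and `f(β) ≤ 0 ≤ f(-β)`, the stabilised nonlinearity `f(x) + κx` maps `[-β, β]` into
`[-κβ, κβ]`, and the factor `0 ≤ V ≤ 1` preserves this. At a maximum point the discrete Laplacian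
is nonpositive, which bounds the predictor directly. For the BDF2 step, at a maximum point of
`φⁿ - η φⁿ⁻¹` the scheme expresses `(b₀ + κ)(φⁿ - η φⁿ⁻¹)` through `φⁿ⁻¹ - η φⁿ⁻²`, `φⁿ⁻²` and
constants, with weights that are nonnegative exactly under the step-size restriction. Lower bounds
follow by applying the same estimates to the negated grid functions.
-/

lemma maxNorm_le_iff {M : ℕ} [NeZero M] {v : ZMod M × ZMod M → ℝ} {β : ℝ} :
    maxNorm M v ≤ β ↔ ∀ p, |v p| ≤ β :=
  ⟨fun hv p => (Finset.le_sup' (fun q => |v q|) (Finset.mem_univ p)).trans hv,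
    fun hv => Finset.sup'_le _ _ fun p _ => hv p⟩

lemma lapH_neg (M : ℕ) (h : ℝ) (v : ZMod M × ZMod M → ℝ) :
    lapH M h (-v) = -lapH M h v := by
  ext p
  simp only [lapH, Pi.neg_apply]
  ring

lemma lapH_le_of_forall_le {M : ℕ} {h b : ℝ} {v : ZMod M × ZMod M → ℝ}
    (hv : ∀ q, v q ≤ b) (p : ZMod M × ZMod M) :
    lapH M h v p ≤ 4 * (b - v p) / h ^ 2 := by
  unfold lapH
  gcongr
  linarith [hv (p.1 + 1, p.2), hv (p.1 - 1, p.2), hv (p.1, p.2 + 1), hv (p.1, p.2 - 1)]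

lemma lapH_le_of_isMax_sub_smul {M : ℕ} {h η β : ℝ} {v w : ZMod M × ZMod M → ℝ}
    {p : ZMod M × ZMod M} (hη : 0 ≤ η) (hmax : ∀ q, v q - η * w q ≤ v p - η * w p)
    (hw : ∀ q, w q ≤ β) :
    lapH M h v p ≤ 4 * (η * (β - w p)) / h ^ 2 := by
  have hv : ∀ q, v q ≤ v p + η * (β - w p) := fun q => by
    nlinarith [hmax q, mul_le_mul_of_nonneg_left (hw q) hη]
  simpa using lapH_le_of_forall_le hv p

lemma abs_add_mul_le_of_abs_deriv_le {f : ℝ → ℝ} {κ β x : ℝ} (hf : Differentiable ℝ f)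
    (hκ : ∀ y, |y| ≤ β → |deriv f y| ≤ κ) (hfβ : f β ≤ 0) (hfβ' : 0 ≤ f (-β))
    (hx : |x| ≤ β) : |f x + κ * x| ≤ κ * β := by
  have hlip : ∀ y ∈ Set.Icc (-β) β, ∀ z ∈ Set.Icc (-β) β, |f y - f z| ≤ κ * |y - z| :=
    fun y hy z hz => (convex_Icc (-β) β).norm_image_sub_le_of_norm_deriv_le
      (fun w _ => hf w) (fun w hw => hκ w (abs_le.mpr hw)) hz hy
  have hx' : x ∈ Set.Icc (-β) β := abs_le.mp hx
  have hβ : 0 ≤ β := (abs_nonneg x).trans hx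
  have hup := (abs_le.mp (hlip x hx' β ⟨by linarith, le_rfl⟩)).2
  have hlo := (abs_le.mp (hlip x hx' (-β) ⟨le_rfl, by linarith⟩)).1
  rw [abs_of_nonpos (by linarith [hx'.2])] at hup
  rw [abs_of_nonneg (by linarith [hx'.1])] at hlo
  rw [abs_le]
  constructor <;> nlinarith

lemma D2_eq (τ w : ℕ → ℝ) {n : ℕ} (hn : 1 ≤ n) :
    D2 τ w n = (1 + 2 * ratio τ n) / (τ n * (1 + ratio τ n)) * (w n - w (n - 1))
      - ratio τ n ^ 2 / (τ n * (1 + ratio τ n)) * (w (n - 1) - w (n - 2)) := by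
  obtain rfl | ⟨k, rfl⟩ : n = 1 ∨ ∃ k, n = k + 2 := by
    rcases n with _ | _ | k
    · omega
    · exact .inl rfl
    · exact .inr ⟨k, rfl⟩
  · simp [D2, bker, ratio]
  · have hlow : ∑ j ∈ Finset.Icc 1 k, bker τ (k + 2) (k + 2 - j) * (w j - w (j - 1)) = 0 :=
      Finset.sum_eq_zero fun j hj => by
        have : 2 ≤ k + 2 - j := by simp at hj; omega
        simp [bker, show k + 2 - j ≠ 0 by omega, show k + 2 - j ≠ 1 by omega]
    rw [D2, Finset.sum_Icc_succ_top (by omega), Finset.sum_Icc_succ_top (by omega), hlow]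
    simp [bker, show k + 2 - (k + 1) = 1 by omega]
    ring

lemma abs_le_of_abs_sub_mul_le {a b η β : ℝ} (hη : 0 ≤ η) (ha : |a| ≤ β)
    (hb : |b - η * a| ≤ (1 - η) * β) : |b| ≤ β :=
  calc |b| = |(b - η * a) + η * a| := by ring_nf
    _ ≤ |b - η * a| + |η * a| := abs_add_le _ _
    _ = |b - η * a| + η * |a| := by rw [abs_mul, abs_of_nonneg hη]
    _ ≤ (1 - η) * β + η * β := by gcongr
    _ = β := by ring

lemma ratio_nonneg {τ : ℕ → ℝ} {N n : ℕ} (hτ : ∀ k, 1 ≤ k → k ≤ N → 0 < τ k) (hn : n ≤ N) :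
    0 ≤ ratio τ n := by
  unfold ratio
  split_ifs with h2
  · exact div_nonneg (hτ n (by omega) hn).le (hτ (n - 1) (by omega) (by omega)).le
  · exact le_rfl

/-- With the BDF2 kernels `b₀ = (1 + 2r)/(t(1 + r))` and `b₁ = -r²/(t(1 + r))`, the conclusion
reads `η²K ≤ (1 - η)(b₀η + b₁)`. -/
lemma step_bound_consequences {t r η K : ℝ} (ht : 0 < t) (hr : 0 ≤ r) (hK : 0 ≤ K) (hη : η < 1)
    (hτ : t ≤ ((1 + 2 * r) * η - r ^ 2) / (η ^ 2 * (1 + r)) * (1 - η) / K) :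
    0 < η ∧ η ^ 2 * K ≤
      (1 - η) * ((1 + 2 * r) / (t * (1 + r)) * η - r ^ 2 / (t * (1 + r))) := by
  have hpos := ht.trans_le hτ
  have hK' : 0 < K := hK.lt_of_ne (by rintro rfl; simp at hpos)
  have hη2 : 0 < η ^ 2 * (1 + r) := by
    rcases eq_or_ne η 0 with rfl | hη0
    · simp at hpos
    · positivity
  have hA : 0 < (1 + 2 * r) * η - r ^ 2 := by
    rw [div_pos_iff_of_pos_right hK', mul_pos_iff_of_pos_right (by linarith),
      div_pos_iff_of_pos_right hη2] at hpos
    exact hpos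
  refine ⟨by nlinarith, ?_⟩
  rw [le_div_iff₀ hK', div_mul_eq_mul_div, le_div_iff₀ hη2] at hτ
  rw [show (1 + 2 * r) / (t * (1 + r)) * η - r ^ 2 / (t * (1 + r))
      = ((1 + 2 * r) * η - r ^ 2) / (t * (1 + r)) by ring, ← mul_div_assoc,
    le_div_iff₀ (by positivity)]
  linear_combination hτ

section Grid

variable {M : ℕ} [NeZero M] {h ε κ β : ℝ}

lemma predictor_le {t : ℝ} {u v g : ZMod M × ZMod M → ℝ} (ht : 0 < t) (hκ : 0 ≤ κ)
    (hu : ∀ p, u p ≤ β) (hg : ∀ p, g p + κ * u p ≤ κ * β)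
    (heq : ∀ p, (v p - u p) / t = ε ^ 2 * lapH M h v p + g p - κ * (v p - u p))
    (p : ZMod M × ZMod M) : v p ≤ β := by
  obtain ⟨p₀, hp₀⟩ := Finite.exists_max v
  refine (hp₀ p).trans ?_
  have hlap : ε ^ 2 * lapH M h v p₀ ≤ 0 :=
    mul_nonpos_of_nonneg_of_nonpos (sq_nonneg ε) (by simpa using lapH_le_of_forall_le hp₀ p₀)
  have hdiff : v p₀ - u p₀ = t * (ε ^ 2 * lapH M h v p₀ + g p₀ - κ * (v p₀ - u p₀)) := by
    rw [← heq p₀]; field_simp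
  by_contra! hv
  nlinarith [hu p₀, hg p₀, mul_pos ht (sub_pos.mpr hv)]

lemma predictor_abs_le {t : ℝ} {u v g : ZMod M × ZMod M → ℝ} (ht : 0 < t) (hκ : 0 ≤ κ)
    (hu : ∀ p, |u p| ≤ β) (hg : ∀ p, |g p + κ * u p| ≤ κ * β)
    (heq : ∀ p, (v p - u p) / t = ε ^ 2 * lapH M h v p + g p - κ * (v p - u p))
    (p : ZMod M × ZMod M) : |v p| ≤ β := by
  refine abs_le.mpr ⟨neg_le.mp ?_, predictor_le ht hκ (fun q => (abs_le.mp (hu q)).2)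
    (fun q => (abs_le.mp (hg q)).2) heq p⟩
  refine predictor_le (h := h) (ε := ε) (u := -u) (v := -v) (g := -g) ht hκ
    (fun q => neg_le.mp (abs_le.mp (hu q)).1)
    (fun q => by simp only [Pi.neg_apply]; linarith [(abs_le.mp (hg q)).1]) (fun q => ?_) p
  simp only [lapH_neg, Pi.neg_apply]
  linear_combination -heq q

lemma bdf2_sub_le {η b₀ B : ℝ} {w₀ w₁ w₂ g : ZMod M × ZMod M → ℝ} (hb₀ : 0 < b₀) (hB : 0 ≤ B)
    (hκ : 0 ≤ κ) (hη : 0 < η) (hcond : η ^ 2 * (κ + 4 * ε ^ 2 / h ^ 2) ≤ (1 - η) * (b₀ * η - B))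
    (hw₀ : ∀ p, w₀ p ≤ β) (hw₁ : ∀ p, w₁ p ≤ β) (hz : ∀ p, w₁ p - η * w₀ p ≤ (1 - η) * β)
    (hg : ∀ p, g p ≤ κ * β)
    (heq : ∀ p, b₀ * (w₂ p - w₁ p) - B * (w₁ p - w₀ p) = ε ^ 2 * lapH M h w₂ p + g p - κ * w₂ p)
    (p : ZMod M × ZMod M) : w₂ p - η * w₁ p ≤ (1 - η) * β := by
  obtain ⟨p₀, hp₀⟩ := Finite.exists_max fun q => w₂ q - η * w₁ q
  refine (hp₀ p).trans ?_
  have hlap : ε ^ 2 * lapH M h w₂ p₀ ≤ η * (4 * ε ^ 2 / h ^ 2) * (β - w₁ p₀) :=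
    calc ε ^ 2 * lapH M h w₂ p₀ ≤ ε ^ 2 * (4 * (η * (β - w₁ p₀)) / h ^ 2) :=
          mul_le_mul_of_nonneg_left (lapH_le_of_isMax_sub_smul hη.le hp₀ hw₁) (sq_nonneg ε)
      _ = η * (4 * ε ^ 2 / h ^ 2) * (β - w₁ p₀) := by ring
  -- With `c` below, `(b₀ + κ) (w₂ - η w₁)` is bounded by `c (w₁ - η w₀) + (c η - B) w₀` plus
  -- constants; the step-size condition is exactly `B ≤ c η`, which makes both weights nonnegative.
  obtain ⟨c, hc⟩ : ∃ c, c = b₀ * (1 - η) - η * (κ + 4 * ε ^ 2 / h ^ 2) + B := ⟨_, rfl⟩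
  have hcη : B ≤ c * η := by rw [hc]; nlinarith
  have hc₀ : 0 ≤ c := nonneg_of_mul_nonneg_left (hB.trans hcη) hη
  have h₁ := mul_le_mul_of_nonneg_left (hz p₀) hc₀
  have h₀ := mul_le_mul_of_nonneg_left (hw₀ p₀) (sub_nonneg.mpr hcη)
  have hmain : (b₀ + κ) * (w₂ p₀ - η * w₁ p₀) ≤ (b₀ + κ) * ((1 - η) * β) := by
    rw [hc] at h₁ h₀
    linear_combination heq p₀ + hlap + hg p₀ + h₁ + h₀
  exact le_of_mul_le_mul_left hmain (by linarith)

lemma bdf2_abs_sub_le {η b₀ B : ℝ} {w₀ w₁ w₂ g : ZMod M × ZMod M → ℝ} (hb₀ : 0 < b₀)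
    (hB : 0 ≤ B) (hκ : 0 ≤ κ) (hη : 0 < η)
    (hcond : η ^ 2 * (κ + 4 * ε ^ 2 / h ^ 2) ≤ (1 - η) * (b₀ * η - B))
    (hw₀ : ∀ p, |w₀ p| ≤ β) (hw₁ : ∀ p, |w₁ p| ≤ β) (hz : ∀ p, |w₁ p - η * w₀ p| ≤ (1 - η) * β)
    (hg : ∀ p, |g p| ≤ κ * β)
    (heq : ∀ p, b₀ * (w₂ p - w₁ p) - B * (w₁ p - w₀ p) = ε ^ 2 * lapH M h w₂ p + g p - κ * w₂ p)
    (p : ZMod M × ZMod M) : |w₂ p - η * w₁ p| ≤ (1 - η) * β := by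
  refine abs_le.mpr ⟨neg_le.mp ?_, bdf2_sub_le hb₀ hB hκ hη hcond
    (fun q => (abs_le.mp (hw₀ q)).2) (fun q => (abs_le.mp (hw₁ q)).2)
    (fun q => (abs_le.mp (hz q)).2) (fun q => (abs_le.mp (hg q)).2) heq p⟩
  have := bdf2_sub_le (h := h) (ε := ε) (w₀ := -w₀) (w₁ := -w₁) (w₂ := -w₂) (g := -g)
    hb₀ hB hκ hη hcond (fun q => neg_le.mp (abs_le.mp (hw₀ q)).1)
    (fun q => neg_le.mp (abs_le.mp (hw₁ q)).1)
    (fun q => by simp only [Pi.neg_apply]; linarith [(abs_le.mp (hz q)).1])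
    (fun q => neg_le.mp (abs_le.mp (hg q)).1)
    (fun q => by simp only [lapH_neg, Pi.neg_apply]; linear_combination -heq q) p
  simp only [Pi.neg_apply] at this
  linarith

end Grid

namespace BDF2sESAVI

variable {M : ℕ} [NeZero M] {h ε κ β η : ℝ} {f F V : ℝ → ℝ} {N : ℕ} {τ : ℕ → ℝ}
  {φ φhat : ℕ → ZMod M × ZMod M → ℝ} {R : ℕ → ℝ}

theorem abs_le_succ (hsch : BDF2sESAVI M h ε κ f F V N τ φ φhat R)
    (hfκ : ∀ x, |x| ≤ β → |f x + κ * x| ≤ κ * β) (hκ : 0 ≤ κ)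
    (hV : ∀ z, 0 ≤ V z ∧ V z ≤ 1) (hτ : ∀ k, 1 ≤ k → k ≤ N → 0 < τ k) (hη : η < 1)
    (hstep : ∀ n, 1 ≤ n → n ≤ N →
      τ n ≤ ((1 + 2 * ratio τ n) * η - (ratio τ n) ^ 2) / (η ^ 2 * (1 + ratio τ n))
        * (1 - η) / (κ + 4 * ε ^ 2 / h ^ 2))
    {n : ℕ} (hn : n + 1 ≤ N)
    (ih : ∀ p, |φ (n - 1) p| ≤ β ∧ |φ n p| ≤ β ∧ |φ n p - η * φ (n - 1) p| ≤ (1 - η) * β) :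
    ∀ p, |φ n p| ≤ β ∧ |φ (n + 1) p| ≤ β ∧ |φ (n + 1) p - η * φ n p| ≤ (1 - η) * β := by
  have ht := hτ (n + 1) (by omega) hn
  have hr := ratio_nonneg hτ hn
  obtain ⟨hη₀, hcond⟩ :=
    step_bound_consequences ht hr (by positivity) hη (hstep (n + 1) (by omega) hn)
  have hhat : ∀ p, |φhat (n + 1) p| ≤ β :=
    predictor_abs_le ht hκ (fun p => (ih p).2.1) (fun p => hfκ _ (ih p).2.1)
      fun p => by simpa only [Nat.add_sub_cancel] using hsch.pred (n + 1) (by omega) hn p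
  set ν := V (gh M h F (φhat (n + 1)) (R n))
  have hg : ∀ p, |ν * (f (φhat (n + 1) p) + κ * φhat (n + 1) p)| ≤ κ * β := fun p => by
    rw [abs_mul, abs_of_nonneg (hV _).1]
    exact (mul_le_of_le_one_left (abs_nonneg _) (hV _).2).trans (hfκ _ (hhat p))
  have hz := bdf2_abs_sub_le (w₂ := φ (n + 1)) (div_pos (by linarith) (by positivity))
    (div_nonneg (sq_nonneg _) (by positivity)) hκ hη₀ hcond (fun p => (ih p).1)
    (fun p => (ih p).2.1) (fun p => (ih p).2.2) hg fun p => by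
      have hs := hsch.step (n + 1) (by omega) hn p
      rw [D2_eq _ _ (by omega), Nat.add_sub_cancel, show n + 1 - 2 = n - 1 by omega] at hs
      linear_combination hs
  exact fun p => ⟨(ih p).2.1, abs_le_of_abs_sub_mul_le hη₀.le (ih p).2.1 (hz p), hz p⟩

theorem abs_le (hsch : BDF2sESAVI M h ε κ f F V N τ φ φhat R)
    (hfκ : ∀ x, |x| ≤ β → |f x + κ * x| ≤ κ * β) (hκ : 0 ≤ κ)
    (hV : ∀ z, 0 ≤ V z ∧ V z ≤ 1) (hτ : ∀ k, 1 ≤ k → k ≤ N → 0 < τ k) (hη : η < 1)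
    (hstep : ∀ n, 1 ≤ n → n ≤ N →
      τ n ≤ ((1 + 2 * ratio τ n) * η - (ratio τ n) ^ 2) / (η ^ 2 * (1 + ratio τ n))
        * (1 - η) / (κ + 4 * ε ^ 2 / h ^ 2))
    (h₀ : ∀ p, |φ 0 p| ≤ β) :
    ∀ m ≤ N, ∀ p,
      |φ (m - 1) p| ≤ β ∧ |φ m p| ≤ β ∧ |φ m p - η * φ (m - 1) p| ≤ (1 - η) * β := by
  intro m
  induction m with
  | zero =>
    intro _ p
    refine ⟨h₀ p, h₀ p, ?_⟩
    rw [Nat.zero_sub, ← one_sub_mul, abs_mul, abs_of_pos (by linarith)]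
    exact mul_le_mul_of_nonneg_left (h₀ p) (by linarith)
  | succ n ih =>
    intro hn
    exact hsch.abs_le_succ hfκ hκ hV hτ hη hstep hn (ih (by omega))

end BDF2sESAVI

theorem stmt0_general (M : ℕ) [NeZero M] (h ε κ β : ℝ)
    (f F V : ℝ → ℝ) (hf : ContDiff ℝ 1 f)
    (hfβ : f β ≤ 0) (hfβ' : 0 ≤ f (-β))
    (hκ : ∀ x : ℝ, |x| ≤ β → |deriv f x| ≤ κ)
    (hV : ∀ z : ℝ, 0 ≤ V z ∧ V z ≤ 1)
    (N : ℕ) (τ : ℕ → ℝ) (hτ : ∀ k, 1 ≤ k → k ≤ N → 0 < τ k)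
    (η : ℝ)
    (hη2 : η < 1)
    (hstep : ∀ n, 1 ≤ n → n ≤ N →
      τ n ≤ ((1 + 2 * ratio τ n) * η - (ratio τ n) ^ 2) / (η ^ 2 * (1 + ratio τ n))
        * (1 - η) / (κ + 4 * ε ^ 2 / h ^ 2))
    (φ φhat : ℕ → ZMod M × ZMod M → ℝ) (R : ℕ → ℝ)
    (hsch : BDF2sESAVI M h ε κ f F V N τ φ φhat R)
    (hφ0 : maxNorm M (φ 0) ≤ β) :
    ∀ n, 1 ≤ n → n ≤ N → maxNorm M (φ n) ≤ β := by
  have h₀ := maxNorm_le_iff.mp hφ0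
  have hκ₀ : 0 ≤ κ := (abs_nonneg _).trans (hκ 0 (by simpa using (abs_nonneg _).trans (h₀ 0)))
  have hfκ : ∀ x, |x| ≤ β → |f x + κ * x| ≤ κ * β := fun x hx =>
    abs_add_mul_le_of_abs_deriv_le (hf.differentiable one_ne_zero) hκ hfβ hfβ' hx
  intro n _ hn
  exact maxNorm_le_iff.mpr fun p => (hsch.abs_le hfκ hκ₀ hV hτ hη2 hstep h₀ n hn p).2.1

/-- Theorem 3.1 (discrete MBP of the BDF2-sESAV-I scheme): under the stated
conditions on f, κ, V, the step ratios, η and the step sizes, if ‖φ^0‖_∞ ≤ β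
then ‖φ^n‖_∞ ≤ β for all 1 ≤ n ≤ N. -/
theorem stmt0 (M : ℕ) [NeZero M] (hM : 1 ≤ M) (h ε κ β : ℝ)
    (hh : 0 < h) (hε : 0 < ε)
    (f F V : ℝ → ℝ) (hf : ContDiff ℝ 1 f) (hβ : 0 < β)
    (hfβ : f β ≤ 0) (hfβ' : 0 ≤ f (-β))
    (hκ : ∀ x : ℝ, |x| ≤ β → |deriv f x| ≤ κ)
    (hV : ∀ z : ℝ, 0 ≤ V z ∧ V z ≤ 1)
    (N : ℕ) (τ : ℕ → ℝ) (hτ : ∀ k, 1 ≤ k → k ≤ N → 0 < τ k)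
    (hr : ∀ k, 2 ≤ k → k ≤ N → 0 < ratio τ k ∧ ratio τ k < 1 + Real.sqrt 2)
    (η : ℝ) (hη1 : ∀ k, 2 ≤ k → k ≤ N → (ratio τ k) ^ 2 / (1 + 2 * ratio τ k) < η)
    (hη2 : η < 1)
    (hstep : ∀ n, 1 ≤ n → n ≤ N →
      τ n ≤ ((1 + 2 * ratio τ n) * η - (ratio τ n) ^ 2) / (η ^ 2 * (1 + ratio τ n))
        * (1 - η) / (κ + 4 * ε ^ 2 / h ^ 2))
    (φ φhat : ℕ → ZMod M × ZMod M → ℝ) (R : ℕ → ℝ)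
    (hsch : BDF2sESAVI M h ε κ f F V N τ φ φhat R)
    (hφ0 : maxNorm M (φ 0) ≤ β) :
    ∀ n, 1 ≤ n → n ≤ N → maxNorm M (φ n) ≤ β :=
  stmt0_general M h ε κ β f F V hf hfβ hfβ' hκ hV N τ hτ η hη2 hstep φ φhat R hsch hφ0
end

section
/- Let δ ∈ (0, 4.864) and r_max := 4.864 − δ. Let τ_1, …, τ_{n+1} > 0 be step sizes whose ratios satisfy 0 < r_k < r_max for 2 ≤ k ≤ n+1, and define G_k(w) := (r_{k+1}·√r_max/(2(1+r_{k+1})))·w²/τ_k for w ∈ ℝ. Then for any real numbers w_1, …, w_n: if n = 1, then w_1 · b_0^{(1)} w_1 ≥ G_1(w_1); and if n ≥ 2, then w_n · Σ_{k=1}^n b_{n−k}^{(n)} w_k ≥ G_n(w_n) − G_{n−1}(w_{n−1}) + δ·w_n²/(32τ_n). -/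
lemma myQ1 (R s : ℝ) (hR0 : 0 ≤ R) (hR : R ≤ 4.864) (hs : s ^ 2 = R) (hs0 : 0 ≤ s) :
    16 * R * s ≤ 27.136 + 28.136 * R + R ^ 2 := by
  have h486 : 0 ≤ 4.864 - R := by linarith
  have hM : 0 < 27.136 + 28.136 * R + R ^ 2 := by nlinarith
  have hsq : (16 * R * s) ^ 2 = 256 * R ^ 3 := by
    have : (16 * R * s) ^ 2 = 256 * R ^ 2 * s ^ 2 := by ring
    rw [this, hs]; ring
  have hQ : 256 * R ^ 3 ≤ (27.136 + 28.136 * R + R ^ 2) ^ 2 := by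
    nlinarith [mul_nonneg (mul_nonneg hR0 hR0) h486, mul_nonneg hR0 h486,
      mul_nonneg hR0 hR0, sq_nonneg (R ^ 2)]
  nlinarith [mul_nonneg (mul_nonneg hR0 hR0) hs0]

lemma myQ2 (R s : ℝ) (hR0 : 0 ≤ R) (hR : R ≤ 4.864) (hs : s ^ 2 = R) (hs0 : 0 ≤ s) :
    32 * R * s ≤ 27.136 + 60.136 * R + R ^ 2 := by
  have h486 : 0 ≤ 4.864 - R := by linarith
  have hM : 0 < 27.136 + 60.136 * R + R ^ 2 := by nlinarith
  have hsq : (32 * R * s) ^ 2 = 1024 * R ^ 3 := by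
    have : (32 * R * s) ^ 2 = 1024 * R ^ 2 * s ^ 2 := by ring
    rw [this, hs]; ring
  have hQ : 1024 * R ^ 3 ≤ (27.136 + 60.136 * R + R ^ 2) ^ 2 := by
    nlinarith [sq_nonneg ((4.864 - R) * R), mul_nonneg (mul_nonneg h486 hR0) hR0,
      mul_nonneg h486 hR0, h486, hR0]
  nlinarith [mul_nonneg (mul_nonneg hR0 hR0) hs0]

set_option maxHeartbeats 1000000 in
lemma mycoeff (R s a b : ℝ) (hR0 : 0 < R) (hR : R ≤ 4.864) (hs : s ^ 2 = R) (hs0 : 0 ≤ s)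
    (ha0 : 0 ≤ a) (haR : a ≤ R) (hb0 : 0 ≤ b) (hbR : b ≤ R) :
    16 * b * R * (1 + a) + (4.864 - R) * s * (1 + a) * (1 + b) + 16 * a ^ 2 * (1 + b)
      ≤ 32 * s * (1 + 2 * a) * (1 + b) := by
  have e1 := myQ1 R s hR0.le hR hs hs0
  have e2 := myQ2 R s hR0.le hR hs hs0
  have haR' : 0 ≤ R - a := by linarith
  have hbR' : 0 ≤ R - b := by linarith
  have hss : 16 * R * s ^ 2 = 16 * R ^ 2 := by rw [hs]; ring
  have hss2 : 32 * R * s ^ 2 = 32 * R ^ 2 := by rw [hs]; ring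
  have t00 : 0 ≤ (27.136 + R) * s := mul_nonneg (by linarith) hs0
  have sl1 : 0 ≤ 27.136 + 28.136 * R + R ^ 2 - 16 * R * s := by linarith
  have sl1' : 0 ≤ 27.136 + 60.136 * R + R ^ 2 - 16 * R * s := by nlinarith [mul_nonneg hR0.le hs0]
  have sl2 : 0 ≤ 27.136 + 60.136 * R + R ^ 2 - 32 * R * s := by linarith
  have t0R : 0 ≤ 32 * s * (1 + R) - (4.864 - R) * s * (1 + R) - 16 * R ^ 2 := by
    nlinarith [mul_nonneg hs0 sl1]
  have tR0 : 0 ≤ 32 * s * (1 + 2 * R) - (4.864 - R) * s * (1 + R) - 16 * R ^ 2 := by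
    nlinarith [mul_nonneg hs0 sl1']
  have tRR : 0 ≤ (1 + R) * (32 * s * (1 + 2 * R) - (4.864 - R) * s * (1 + R) - 32 * R ^ 2) := by
    have h : 0 ≤ 32 * s * (1 + 2 * R) - (4.864 - R) * s * (1 + R) - 32 * R ^ 2 := by
      nlinarith [mul_nonneg hs0 sl2]
    exact mul_nonneg (by linarith) h
  have p1 : 0 ≤ (R - a) * (R - b) * ((27.136 + R) * s) :=
    mul_nonneg (mul_nonneg haR' hbR') t00
  have p2 : 0 ≤ a * (R - b) * (32 * s * (1 + 2 * R) - (4.864 - R) * s * (1 + R) - 16 * R ^ 2) :=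
    mul_nonneg (mul_nonneg ha0 hbR') tR0
  have p3 : 0 ≤ (R - a) * b * (32 * s * (1 + R) - (4.864 - R) * s * (1 + R) - 16 * R ^ 2) :=
    mul_nonneg (mul_nonneg haR' hb0) t0R
  have p4 : 0 ≤ a * b * ((1 + R) * (32 * s * (1 + 2 * R) - (4.864 - R) * s * (1 + R) - 32 * R ^ 2)) :=
    mul_nonneg (mul_nonneg ha0 hb0) tRR
  have p5 : 0 ≤ 16 * R * a * (R - a) * (R - b) :=
    mul_nonneg (mul_nonneg (mul_nonneg (by linarith) ha0) haR') hbR'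
  have p6 : 0 ≤ 16 * (1 + R) * R * a * (R - a) * b :=
    mul_nonneg (mul_nonneg (mul_nonneg (mul_nonneg (by linarith) hR0.le) ha0) haR') hb0
  have hsum : R ^ 2 * (32 * s * (1 + 2 * a) * (1 + b)
      - (16 * b * R * (1 + a) + (4.864 - R) * s * (1 + a) * (1 + b) + 16 * a ^ 2 * (1 + b)))
      = (R - a) * (R - b) * ((27.136 + R) * s)
        + a * (R - b) * (32 * s * (1 + 2 * R) - (4.864 - R) * s * (1 + R) - 16 * R ^ 2)
        + (R - a) * b * (32 * s * (1 + R) - (4.864 - R) * s * (1 + R) - 16 * R ^ 2)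
        + a * b * ((1 + R) * (32 * s * (1 + 2 * R) - (4.864 - R) * s * (1 + R) - 32 * R ^ 2))
        + 16 * R * a * (R - a) * (R - b) + 16 * (1 + R) * R * a * (R - a) * b := by
    ring
  have hRR : (0:ℝ) < R ^ 2 := by positivity
  have hX : 0 ≤ R ^ 2 * (32 * s * (1 + 2 * a) * (1 + b)
      - (16 * b * R * (1 + a) + (4.864 - R) * s * (1 + a) * (1 + b) + 16 * a ^ 2 * (1 + b))) := by
    rw [hsum]; linarith
  have := (mul_nonneg_iff_of_pos_left hRR).mp hX
  linarith

set_option maxHeartbeats 1000000 in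
lemma mykey (R s a b x y : ℝ) (hR0 : 0 < R) (hR : R ≤ 4.864) (hs : s ^ 2 = R) (hs0 : 0 ≤ s)
    (ha0 : 0 < a) (haR : a ≤ R) (hb0 : 0 < b) (hbR : b ≤ R) :
    b * s / (2 * (1 + b)) * x ^ 2 - a ^ 2 * s / (2 * (1 + a)) * y ^ 2 + (4.864 - R) * x ^ 2 / 32
      ≤ ((1 + 2 * a) * x ^ 2 - a ^ 2 * (x * y)) / (1 + a) := by
  have hcoeff := mycoeff R s a b hR0 hR hs hs0 ha0.le haR hb0.le hbR
  subst R
  have hs0' : 0 < s := by nlinarith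
  have h1a : (0:ℝ) < 1 + a := by linarith
  have h1b : (0:ℝ) < 1 + b := by linarith
  have hAM : 0 ≤ x ^ 2 - 2 * s * (x * y) + s ^ 2 * y ^ 2 := by nlinarith [sq_nonneg (x - s * y)]
  have hAM2 : 0 ≤ 16 * a ^ 2 * (1 + b) * (x ^ 2 - 2 * s * (x * y) + s ^ 2 * y ^ 2) :=
    mul_nonneg (by positivity) hAM
  have hslack : 0 ≤ (32 * s * (1 + 2 * a) * (1 + b) - 16 * b * s ^ 2 * (1 + a)
      - (4.864 - s ^ 2) * s * (1 + a) * (1 + b) - 16 * a ^ 2 * (1 + b)) * x ^ 2 :=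
    mul_nonneg (by linarith) (sq_nonneg x)
  have hN : 0 ≤ (32 * s * (1 + 2 * a) * (1 + b) - 16 * b * s ^ 2 * (1 + a)
      - (4.864 - s ^ 2) * s * (1 + a) * (1 + b)) * x ^ 2
      - 32 * s * (1 + b) * a ^ 2 * (x * y) + 16 * a ^ 2 * s ^ 2 * (1 + b) * y ^ 2 := by
    nlinarith [hAM2, hslack]
  have heq : ((1 + 2 * a) * x ^ 2 - a ^ 2 * (x * y)) / (1 + a)
      - (b * s / (2 * (1 + b)) * x ^ 2 - a ^ 2 * s / (2 * (1 + a)) * y ^ 2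
        + (4.864 - s ^ 2) * x ^ 2 / 32)
      = ((32 * s * (1 + 2 * a) * (1 + b) - 16 * b * s ^ 2 * (1 + a)
          - (4.864 - s ^ 2) * s * (1 + a) * (1 + b)) * x ^ 2
          - 32 * s * (1 + b) * a ^ 2 * (x * y) + 16 * a ^ 2 * s ^ 2 * (1 + b) * y ^ 2)
        / (32 * s * (1 + a) * (1 + b)) := by
    field_simp
    ring
  have hfrac : 0 ≤ ((32 * s * (1 + 2 * a) * (1 + b) - 16 * b * s ^ 2 * (1 + a)
      - (4.864 - s ^ 2) * s * (1 + a) * (1 + b)) * x ^ 2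
      - 32 * s * (1 + b) * a ^ 2 * (x * y) + 16 * a ^ 2 * s ^ 2 * (1 + b) * y ^ 2)
      / (32 * s * (1 + a) * (1 + b)) :=
    div_nonneg hN (by positivity)
  linarith [heq, hfrac]

/-- Lemma 2.1 (positive definiteness of the BDF2 kernels): with
r_max = 4.864 − δ and G_k(w) = (r_{k+1}√r_max/(2(1+r_{k+1})))·w²/τ_k, the kernels
satisfy the stated lower bounds. -/
theorem stmt2 (δ : ℝ) (hδ : 0 < δ) (hδ' : δ < 4.864) (n : ℕ) (hn : 1 ≤ n)
    (τ : ℕ → ℝ) (hτ : ∀ k, 1 ≤ k → k ≤ n + 1 → 0 < τ k)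
    (hr : ∀ k, 2 ≤ k → k ≤ n + 1 → 0 < ratio τ k ∧ ratio τ k < 4.864 - δ)
    (w : ℕ → ℝ) :
    (n = 1 → ratio τ 2 * Real.sqrt (4.864 - δ) / (2 * (1 + ratio τ 2)) * (w 1) ^ 2 / τ 1
        ≤ w 1 * (bker τ 1 0 * w 1)) ∧
    (2 ≤ n →
      ratio τ (n + 1) * Real.sqrt (4.864 - δ) / (2 * (1 + ratio τ (n + 1)))
          * (w n) ^ 2 / τ n
        - ratio τ n * Real.sqrt (4.864 - δ) / (2 * (1 + ratio τ n))
          * (w (n - 1)) ^ 2 / τ (n - 1)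
        + δ * (w n) ^ 2 / (32 * τ n)
      ≤ w n * ∑ k ∈ Finset.Icc 1 n, bker τ n (n - k) * w k) := by
  have hs2 : Real.sqrt (4.864 - δ) ^ 2 = 4.864 - δ := Real.sq_sqrt (by linarith)
  have hs0 : (0:ℝ) ≤ Real.sqrt (4.864 - δ) := Real.sqrt_nonneg _
  set s := Real.sqrt (4.864 - δ) with hsdef
  constructor
  · intro _
    have hτ1 : 0 < τ 1 := hτ 1 le_rfl (by omega)
    obtain ⟨hr0, hr1⟩ := hr 2 (by omega) (by omega)
    have hb0 : bker τ 1 0 = 1 / τ 1 := by simp [bker]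
    rw [hb0]
    have hsle : s ≤ 2.21 := by nlinarith
    have hA : ratio τ 2 * s / (2 * (1 + ratio τ 2)) ≤ 1 := by
      rw [div_le_one (by linarith)]
      nlinarith
    have heq : w 1 * (1 / τ 1 * w 1) = (w 1) ^ 2 / τ 1 := by field_simp
    rw [heq]
    have h1 : ratio τ 2 * s / (2 * (1 + ratio τ 2)) * (w 1) ^ 2 ≤ (w 1) ^ 2 := by
      nlinarith [sq_nonneg (w 1)]
    exact div_le_div_of_nonneg_right h1 hτ1.le
  · intro h2
    obtain ⟨m, rfl⟩ : ∃ m, n = m + 2 := ⟨n - 2, by omega⟩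
    have hne1 : m + 2 ≠ 1 := by omega
    set a := ratio τ (m + 2) with hadef
    set b := ratio τ (m + 2 + 1) with hbdef
    obtain ⟨ha0, haR⟩ := hr (m + 2) (by omega) (by omega)
    obtain ⟨hb0', hbR⟩ := hr (m + 3) (by omega) (by omega)
    have hτn : 0 < τ (m + 2) := hτ _ (by omega) (by omega)
    have hτm : 0 < τ (m + 1) := hτ _ (by omega) (by omega)
    have hrel : τ (m + 2) = a * τ (m + 1) := by
      rw [hadef, ratio, if_pos (by omega)]
      have : m + 2 - 1 = m + 1 := rfl
      rw [this]
      field_simp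
    have hsum : ∑ k ∈ Finset.Icc 1 (m + 2), bker τ (m + 2) (m + 2 - k) * w k
        = bker τ (m + 2) 1 * w (m + 1) + bker τ (m + 2) 0 * w (m + 2) := by
      rw [Finset.sum_Icc_succ_top (by omega), Finset.sum_Icc_succ_top (by omega)]
      have h0 : ∑ k ∈ Finset.Icc 1 m, bker τ (m + 2) (m + 2 - k) * w k = 0 := by
        apply Finset.sum_eq_zero
        intro k hk
        have hk' : k ≤ m := (Finset.mem_Icc.mp hk).2
        have : bker τ (m + 2) (m + 2 - k) = 0 := by
          rw [bker, if_neg hne1, if_neg (by omega), if_neg (by omega)]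
        rw [this, zero_mul]
      rw [h0, show m + 2 - (m + 1) = 1 by omega, show m + 2 - (m + 2) = 0 by omega]
      ring
    have hb0 : bker τ (m + 2) 0 = (1 + 2 * a) / (τ (m + 2) * (1 + a)) := by
      rw [bker, if_neg hne1, if_pos rfl]
    have hb1 : bker τ (m + 2) 1 = -(a ^ 2) / (τ (m + 2) * (1 + a)) := by
      rw [bker, if_neg hne1, if_neg (by omega), if_pos rfl]
    rw [show m + 2 - 1 = m + 1 from rfl, hsum, hb0, hb1]
    have hkey := mykey (4.864 - δ) s a b (w (m + 2)) (w (m + 1))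
      (by linarith) (by linarith) hs2 hs0 ha0 haR.le hb0' hbR.le
    have h1a : (0:ℝ) < 1 + a := by linarith
    have h1b : (0:ℝ) < 1 + b := by linarith
    have heqL : b * s / (2 * (1 + b)) * (w (m + 2)) ^ 2 / τ (m + 2)
        - a * s / (2 * (1 + a)) * (w (m + 1)) ^ 2 / τ (m + 1)
        + δ * (w (m + 2)) ^ 2 / (32 * τ (m + 2))
        = (b * s / (2 * (1 + b)) * (w (m + 2)) ^ 2
            - a ^ 2 * s / (2 * (1 + a)) * (w (m + 1)) ^ 2
            + (4.864 - (4.864 - δ)) * (w (m + 2)) ^ 2 / 32) / τ (m + 2) := by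
      rw [hrel]
      field_simp
      ring
    have heqR : w (m + 2) * (-(a ^ 2) / (τ (m + 2) * (1 + a)) * w (m + 1)
          + (1 + 2 * a) / (τ (m + 2) * (1 + a)) * w (m + 2))
        = (((1 + 2 * a) * (w (m + 2)) ^ 2 - a ^ 2 * (w (m + 2) * w (m + 1))) / (1 + a))
          / τ (m + 2) := by
      field_simp
      ring
    rw [heqL, heqR]
    exact div_le_div_of_nonneg_right hkey hτn.le
end

section
/- Let f : ℝ → ℝ be continuously differentiable, let β > 0 satisfy f(β) ≤ 0 ≤ f(−β), and let κ be a positive constant with κ ≥ max_{x∈[−β,β]}|f′(x)|. Then |f(ξ) + κξ| ≤ κβ for every ξ ∈ [−β, β]. -/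
/-! Since f′ ≥ −κ on [−β, β], the function g x = f x + κx is nondecreasing there, so
−κβ ≤ f(−β) − κβ = g(−β) ≤ g ξ ≤ g β = f β + κβ ≤ κβ. -/

open Set

theorem monotoneOn_add_const_mul_of_neg_le_deriv {f : ℝ → ℝ} {D : Set ℝ} {κ : ℝ}
    (hD : Convex ℝ D) (hf : ContinuousOn f D) (hf' : DifferentiableOn ℝ f (interior D))
    (hκ : ∀ x ∈ interior D, -κ ≤ deriv f x) :
    MonotoneOn (fun x => f x + κ * x) D := by
  have hderiv : ∀ x ∈ interior D, HasDerivAt (fun x => f x + κ * x) (deriv f x + κ) x :=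
    fun x hx => by
      have h := (hf'.differentiableAt (isOpen_interior.mem_nhds hx)).hasDerivAt.add
        ((hasDerivAt_id' x).const_mul κ)
      rwa [mul_one] at h
  refine monotoneOn_of_deriv_nonneg hD (hf.add (continuousOn_const.mul continuousOn_id))
    (fun x hx => (hderiv x hx).differentiableAt.differentiableWithinAt) fun x hx => ?_
  rw [(hderiv x hx).deriv]
  linarith [hκ x hx]

theorem stmt5_general (f : ℝ → ℝ) (hf : ContDiff ℝ 1 f) (β κ : ℝ)
    (hfβ : f β ≤ 0) (hfβ' : 0 ≤ f (-β))
    (hκ : ∀ x ∈ Set.Icc (-β) β, |deriv f x| ≤ κ) :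
    ∀ ξ ∈ Set.Icc (-β) β, |f ξ + κ * ξ| ≤ κ * β := by
  intro ξ hξ
  have hdf : Differentiable ℝ f := hf.differentiable one_ne_zero
  have hmono : MonotoneOn (fun x => f x + κ * x) (Icc (-β) β) :=
    monotoneOn_add_const_mul_of_neg_le_deriv (convex_Icc _ _) hdf.continuous.continuousOn
      hdf.differentiableOn fun x hx =>
        (abs_le.mp (hκ x (interior_subset hx))).1
  have hβ : -β ≤ β := hξ.1.trans hξ.2
  have hleft := hmono (left_mem_Icc.mpr hβ) hξ hξ.1
  have hright := hmono hξ (right_mem_Icc.mpr hβ) hξ.2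
  dsimp only at hleft hright
  rw [abs_le]
  constructor <;> linarith

/-- If f is continuously differentiable, β > 0 with f(β) ≤ 0 ≤ f(−β), and
κ > 0 dominates |f′| on [−β, β], then |f(ξ) + κξ| ≤ κβ for every ξ ∈ [−β, β]. -/
theorem stmt5 (f : ℝ → ℝ) (hf : ContDiff ℝ 1 f) (β κ : ℝ)
    (hβ : 0 < β) (hκ0 : 0 < κ)
    (hfβ : f β ≤ 0) (hfβ' : 0 ≤ f (-β))
    (hκ : ∀ x ∈ Set.Icc (-β) β, |deriv f x| ≤ κ) :
    ∀ ξ ∈ Set.Icc (-β) β, |f ξ + κ * ξ| ≤ κ * β :=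
  stmt5_general f hf β κ hfβ hfβ' hκ
end

section
/- Let ζ > 0 and λ ∈ (0,1) be constants, let the step ratios satisfy 0 < r_k < 1 + √2 for 2 ≤ k ≤ N, and let η ∈ (0,1) satisfy r_k²/(1+2r_k) < η for 2 ≤ k ≤ N. Let {v^k}_{k=1}^N and {w^k}_{k=0}^N be sequences of non-negative reals such that Σ_{k=1}^n d_{n−k}^{(n)}(w^k − w^{k−1}) ≤ ζ·Σ_{k=1}^{n−1} λ^{n−k−1} w^k + v^n for every 1 ≤ n ≤ N. Then w^n ≤ exp(ζ t_n/(1−λ))·(w^0 + Σ_{k=1}^n v^k / b_0^{(k)}) for every 1 ≤ n ≤ N, where t_n := τ_1 + ⋯ + τ_n. -/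
open Finset

theorem Finset.sum_Icc_one_eq_sum_range_reflect {M : Type*} [AddCommMonoid M] (f : ℕ → M)
    (n : ℕ) : ∑ k ∈ Icc 1 n, f k = ∑ j ∈ range n, f (n - j) := by
  rw [← Nat.Ico_zero_eq_range, sum_Ico_reflect f 0 n.le_succ, Nat.add_sub_cancel_left,
    Nat.sub_zero]
  rfl

section SummationByParts

variable {d x w : ℕ → ℝ} {n : ℕ} {M : ℝ}

theorem mul_sub_mul_le_sum_mul_sub_of_antitone (hd : Antitone d)
    (hx : ∀ j, 1 ≤ j → j ≤ n → x j ≤ 0) :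
    d 0 * x 0 - d n * x n ≤ ∑ j ∈ range n, d j * (x j - x (j + 1)) := by
  induction n with
  | zero => simp
  | succ n ih =>
    have hx_succ : d n * x (n + 1) ≤ d (n + 1) * x (n + 1) :=
      mul_le_mul_of_nonpos_right (hd n.le_succ) (hx (n + 1) (by omega) le_rfl)
    rw [sum_range_succ]
    linarith [ih fun j h1 h2 => hx j h1 (by omega)]

theorem mul_sub_le_sum_kernel_mul_sub (hd : Antitone d) (hd_nonneg : 0 ≤ d n) (hn : 0 < n)
    (hw : ∀ k < n, w k ≤ M) :
    d 0 * (w n - M) ≤ ∑ k ∈ Icc 1 n, d (n - k) * (w k - w (k - 1)) := by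
  have hsum := mul_sub_mul_le_sum_mul_sub_of_antitone (n := n) (x := fun j => w (n - j) - M) hd
    fun j h1 h2 => sub_nonpos.2 (hw _ (by omega))
  have hreindex : ∑ k ∈ Icc 1 n, d (n - k) * (w k - w (k - 1)) =
      ∑ j ∈ range n, d j * ((w (n - j) - M) - (w (n - (j + 1)) - M)) := by
    rw [sum_Icc_one_eq_sum_range_reflect]
    refine sum_congr rfl fun j hj => ?_
    rw [Nat.sub_sub_self (mem_range.1 hj).le, Nat.sub_sub]
    ring
  have hw0 : d n * (w 0 - M) ≤ 0 := mul_nonpos_of_nonneg_of_nonpos hd_nonneg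
    (sub_nonpos.2 (hw 0 hn))
  simp only [Nat.sub_zero, Nat.sub_self] at hsum
  linarith

end SummationByParts

theorem sum_Icc_pow_sub_mul_le {lam M : ℝ} {w : ℕ → ℝ} {m : ℕ} (hlam0 : 0 ≤ lam)
    (hlam1 : lam < 1) (hM : 0 ≤ M) (hw : ∀ k ∈ Icc 1 m, w k ≤ M) :
    ∑ k ∈ Icc 1 m, lam ^ (m - k) * w k ≤ M / (1 - lam) := by
  have hgeom : ∑ k ∈ Icc 1 m, lam ^ (m - k) ≤ 1 / (1 - lam) := by
    rw [sum_Icc_one_eq_sum_range_reflect, ← Nat.Ico_zero_eq_range]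
    calc ∑ j ∈ Ico 0 m, lam ^ (m - (m - j)) = ∑ j ∈ Ico 0 m, lam ^ j :=
          sum_congr rfl fun j hj => by rw [Nat.sub_sub_self (mem_Ico.1 hj).2.le]
      _ ≤ lam ^ 0 / (1 - lam) := geom_sum_Ico_le_of_lt_one hlam0 hlam1
      _ = 1 / (1 - lam) := by rw [pow_zero]
  calc ∑ k ∈ Icc 1 m, lam ^ (m - k) * w k ≤ ∑ k ∈ Icc 1 m, lam ^ (m - k) * M :=
        sum_le_sum fun k hk => mul_le_mul_of_nonneg_left (hw k hk) (pow_nonneg hlam0 _)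
    _ = (∑ k ∈ Icc 1 m, lam ^ (m - k)) * M := (sum_mul ..).symm
    _ ≤ 1 / (1 - lam) * M := mul_le_mul_of_nonneg_right hgeom hM
    _ = M / (1 - lam) := by ring

theorem le_exp_mul_add_div_of_mul_sub_le {d₀ τₙ c M v w : ℝ} (hd₀ : 0 ≤ d₀)
    (hτd : 1 ≤ τₙ * d₀) (hc : 0 ≤ c) (hM : 0 ≤ M) (h : d₀ * (w - M) ≤ c * M + v) :
    w ≤ Real.exp (c * τₙ) * M + v / d₀ := by
  have hd₀_pos : 0 < d₀ := hd₀.lt_of_ne' fun h => by norm_num [h] at hτd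
  have hinv : 1 / d₀ ≤ τₙ := (div_le_iff₀ hd₀_pos).2 hτd
  calc w = M + d₀ * (w - M) / d₀ := by field_simp; ring
    _ ≤ M + (c * M + v) / d₀ := by gcongr
    _ = M + c * M * (1 / d₀) + v / d₀ := by ring
    _ ≤ M + c * M * τₙ + v / d₀ := by gcongr
    _ = (c * τₙ + 1) * M + v / d₀ := by ring
    _ ≤ Real.exp (c * τₙ) * M + v / d₀ := by gcongr; exact Real.add_one_le_exp _

theorem le_exp_mul_add_div_of_kernel_ineq {d w : ℕ → ℝ} {n : ℕ} {ζ lam τₙ vₙ M : ℝ}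
    (hd : Antitone d) (hd_nonneg : ∀ j, 0 ≤ d j) (hτd : 1 ≤ τₙ * d 0) (hζ : 0 ≤ ζ)
    (hlam0 : 0 ≤ lam) (hlam1 : lam < 1) (hM : 0 ≤ M) (hn : 0 < n) (hw : ∀ k < n, w k ≤ M)
    (hineq : ∑ k ∈ Icc 1 n, d (n - k) * (w k - w (k - 1)) ≤
      ζ * ∑ k ∈ Icc 1 (n - 1), lam ^ (n - k - 1) * w k + vₙ) :
    w n ≤ Real.exp (ζ * τₙ / (1 - lam)) * M + vₙ / d 0 := by
  have hgeom : ∑ k ∈ Icc 1 (n - 1), lam ^ (n - k - 1) * w k ≤ M / (1 - lam) := by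
    simp_rw [Nat.sub_right_comm n _ 1]
    exact sum_Icc_pow_sub_mul_le hlam0 hlam1 hM fun k hk => hw k (by grind)
  have hstep : d 0 * (w n - M) ≤ ζ / (1 - lam) * M + vₙ := by
    calc d 0 * (w n - M) ≤ ∑ k ∈ Icc 1 n, d (n - k) * (w k - w (k - 1)) :=
          mul_sub_le_sum_kernel_mul_sub hd (hd_nonneg n) hn hw
      _ ≤ ζ * (M / (1 - lam)) + vₙ := hineq.trans (by gcongr)
      _ = ζ / (1 - lam) * M + vₙ := by ring
  rw [show ζ * τₙ / (1 - lam) = ζ / (1 - lam) * τₙ by ring]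
  exact le_exp_mul_add_div_of_mul_sub_le (hd_nonneg 0) hτd
    (div_nonneg hζ (sub_nonneg.2 hlam1.le)) hM hstep

section GronwallBound

variable {ζ lam w₀ : ℝ} {τ b v : ℕ → ℝ} {n : ℕ}

noncomputable def discreteGronwallBound (ζ lam : ℝ) (τ b v : ℕ → ℝ) (w₀ : ℝ) (n : ℕ) : ℝ :=
  Real.exp (ζ * (∑ k ∈ Icc 1 n, τ k) / (1 - lam)) * (w₀ + ∑ k ∈ Icc 1 n, v k / b k)

theorem discreteGronwallBound_zero : discreteGronwallBound ζ lam τ b v w₀ 0 = w₀ := by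
  simp [discreteGronwallBound]

theorem discreteGronwallBound_nonneg (hw₀ : 0 ≤ w₀) (hvb : ∀ k ∈ Icc 1 n, 0 ≤ v k / b k) :
    0 ≤ discreteGronwallBound ζ lam τ b v w₀ n :=
  mul_nonneg (Real.exp_pos _).le (add_nonneg hw₀ (sum_nonneg hvb))

theorem discreteGronwallBound_succ :
    discreteGronwallBound ζ lam τ b v w₀ (n + 1) =
      Real.exp (ζ * τ (n + 1) / (1 - lam)) * discreteGronwallBound ζ lam τ b v w₀ n +
        Real.exp (ζ * (∑ k ∈ Icc 1 (n + 1), τ k) / (1 - lam)) * (v (n + 1) / b (n + 1)) := by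
  simp only [discreteGronwallBound, sum_Icc_succ_top (Nat.le_add_left 1 n), mul_add, add_div,
    Real.exp_add]
  ring

theorem exp_mul_add_le_discreteGronwallBound_succ
    (ht : 0 ≤ ζ * (∑ k ∈ Icc 1 (n + 1), τ k) / (1 - lam)) (hvb : 0 ≤ v (n + 1) / b (n + 1)) :
    Real.exp (ζ * τ (n + 1) / (1 - lam)) * discreteGronwallBound ζ lam τ b v w₀ n +
      v (n + 1) / b (n + 1) ≤ discreteGronwallBound ζ lam τ b v w₀ (n + 1) := by
  rw [discreteGronwallBound_succ]
  gcongr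
  exact le_mul_of_one_le_left hvb (Real.one_le_exp ht)

end GronwallBound

theorem le_discreteGronwallBound_of_kernel_ineq {N : ℕ} {τ v w : ℕ → ℝ} {d : ℕ → ℕ → ℝ}
    {ζ lam : ℝ} (hζ : 0 ≤ ζ) (hlam0 : 0 ≤ lam) (hlam1 : lam < 1)
    (hd : ∀ n, 1 ≤ n → n ≤ N → Antitone (d n))
    (hd_nonneg : ∀ n, 1 ≤ n → n ≤ N → ∀ j, 0 ≤ d n j)
    (hτd : ∀ n, 1 ≤ n → n ≤ N → 1 ≤ τ n * d n 0)
    (hv : ∀ n, 1 ≤ n → n ≤ N → 0 ≤ v n) (hw₀ : 0 ≤ w 0)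
    (hineq : ∀ n, 1 ≤ n → n ≤ N →
      ∑ k ∈ Icc 1 n, d n (n - k) * (w k - w (k - 1)) ≤
        ζ * ∑ k ∈ Icc 1 (n - 1), lam ^ (n - k - 1) * w k + v n) :
    ∀ n ≤ N, ∀ k ≤ n, w k ≤ discreteGronwallBound ζ lam τ (fun k => d k 0) v (w 0) n := by
  set G := discreteGronwallBound ζ lam τ (fun k => d k 0) v (w 0) with hG
  have hvd : ∀ n ≤ N, ∀ k ∈ Icc 1 n, 0 ≤ v k / d k 0 := fun n hn k hk => by
    obtain ⟨hk1, hkn⟩ := mem_Icc.1 hk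
    exact div_nonneg (hv k hk1 (hkn.trans hn)) (hd_nonneg k hk1 (hkn.trans hn) 0)
  have hτ : ∀ n ≤ N, ∀ k ∈ Icc 1 n, 0 ≤ τ k := fun n hn k hk => by
    obtain ⟨hk1, hkn⟩ := mem_Icc.1 hk
    exact (pos_of_mul_pos_left (one_pos.trans_le (hτd k hk1 (hkn.trans hn)))
      (hd_nonneg k hk1 (hkn.trans hn) 0)).le
  have hlam : 0 ≤ 1 - lam := sub_nonneg.2 hlam1.le
  intro n
  induction n with
  | zero =>
    intro _ k hk
    rw [Nat.le_zero.1 hk, hG, discreteGronwallBound_zero]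
  | succ n ih =>
    intro hn k hk
    have hM : 0 ≤ G n := discreteGronwallBound_nonneg hw₀ (hvd n (by omega))
    have hvb : 0 ≤ v (n + 1) / d (n + 1) 0 := hvd (n + 1) hn (n + 1) (by simp)
    have ha : 0 ≤ ζ * τ (n + 1) / (1 - lam) :=
      div_nonneg (mul_nonneg hζ (hτ (n + 1) hn (n + 1) (by simp))) hlam
    have hnext : Real.exp (ζ * τ (n + 1) / (1 - lam)) * G n + v (n + 1) / d (n + 1) 0 ≤
        G (n + 1) :=
      exp_mul_add_le_discreteGronwallBound_succ
        (div_nonneg (mul_nonneg hζ (sum_nonneg (hτ (n + 1) hn))) hlam) hvb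
    rcases hk.lt_or_eq with hk | rfl
    · calc w k ≤ G n := ih (by omega) k (by omega)
        _ ≤ Real.exp (ζ * τ (n + 1) / (1 - lam)) * G n + v (n + 1) / d (n + 1) 0 :=
          le_add_of_le_of_nonneg (le_mul_of_one_le_left hM (Real.one_le_exp ha)) hvb
        _ ≤ G (n + 1) := hnext
    · exact (le_exp_mul_add_div_of_kernel_ineq (hd _ (by omega) hn) (hd_nonneg _ (by omega) hn)
        (hτd _ (by omega) hn) hζ hlam0 hlam1 hM (by omega) (fun k hk => ih (by omega) k (by omega))
        (hineq _ (by omega) hn)).trans hnext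

section Kernels

variable {τ : ℕ → ℝ} {η : ℝ} {n : ℕ}

theorem ratio_of_lt_two (h : n < 2) : ratio τ n = 0 :=
  if_neg (by omega)

theorem one_le_mul_bker_zero (hτ : 0 < τ n) (hr : 0 ≤ ratio τ n) : 1 ≤ τ n * bker τ n 0 := by
  by_cases hn : n = 1
  · subst hn
    simp [bker, hτ.ne']
  · rw [bker, if_neg hn, if_pos rfl, ← mul_div_assoc, mul_div_mul_left _ _ hτ.ne',
      le_div_iff₀ (by linarith)]
    linarith

theorem bker_zero_pos (hτ : 0 < τ n) (hr : 0 ≤ ratio τ n) : 0 < bker τ n 0 :=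
  pos_of_mul_pos_right (one_pos.trans_le (one_le_mul_bker_zero hτ hr)) hτ.le

theorem bker_one_nonpos (hτ : 0 < τ n) (hr : 0 ≤ ratio τ n) : bker τ n 1 ≤ 0 := by
  by_cases hn : n = 1
  · simp [bker, hn]
  · rw [bker, if_neg hn, if_neg one_ne_zero, if_pos rfl, neg_div]
    exact neg_nonpos.2 (by positivity)

theorem bker_zero_mul_add_bker_one_nonneg (hτ : 0 < τ n) (hr : 0 ≤ ratio τ n)
    (hη : ratio τ n ^ 2 / (1 + 2 * ratio τ n) ≤ η) : 0 ≤ bker τ n 0 * η + bker τ n 1 := by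
  rw [div_le_iff₀ (by linarith)] at hη
  by_cases hn : n = 1
  · subst hn
    norm_num [ratio_of_lt_two one_lt_two] at hη
    simp only [bker, if_pos, if_neg one_ne_zero, add_zero]
    positivity
  · rw [bker, bker, if_neg hn, if_pos rfl, if_neg hn, if_neg one_ne_zero, if_pos rfl,
      div_mul_eq_mul_div, ← add_div]
    exact div_nonneg (by linarith) (by positivity)

theorem dker_nonneg (hb₀ : 0 ≤ bker τ n 0) (hq : 0 ≤ bker τ n 0 * η + bker τ n 1)
    (hη : 0 ≤ η) (j : ℕ) : 0 ≤ dker τ η n j := by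
  unfold dker
  split_ifs
  · exact hb₀
  · exact mul_nonneg (pow_nonneg hη _) hq

theorem dker_antitone (hb₀ : 0 ≤ bker τ n 0) (hb₁ : bker τ n 1 ≤ 0)
    (hq : 0 ≤ bker τ n 0 * η + bker τ n 1) (hη0 : 0 ≤ η) (hη1 : η ≤ 1) :
    Antitone (dker τ η n) := by
  refine antitone_nat_of_succ_le fun j => ?_
  rcases j with _ | j
  · simp only [dker, Nat.zero_add, one_ne_zero, if_false, if_true, Nat.sub_self, pow_zero, one_mul]
    nlinarith
  · simp only [dker, Nat.succ_ne_zero, if_false, Nat.add_sub_cancel]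
    exact mul_le_mul_of_nonneg_right (pow_le_pow_of_le_one hη0 hη1 j.le_succ) hq

end Kernels

/-- Discrete Grönwall-type lemma (Lemma 4.2): if
Σ_{k=1}^n d_{n−k}^{(n)}(w^k − w^{k−1}) ≤ ζΣ_{k=1}^{n−1} λ^{n−k−1}w^k + v^n for all
1 ≤ n ≤ N, then w^n ≤ exp(ζ t_n/(1−λ))(w^0 + Σ_{k=1}^n v^k/b_0^{(k)}). -/
theorem stmt8 (N : ℕ) (τ : ℕ → ℝ) (hτ : ∀ k, 1 ≤ k → k ≤ N → 0 < τ k)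
    (ζ lam : ℝ) (hζ : 0 < ζ) (hlam0 : 0 < lam) (hlam1 : lam < 1)
    (hr : ∀ k, 2 ≤ k → k ≤ N → 0 < ratio τ k ∧ ratio τ k < 1 + Real.sqrt 2)
    (η : ℝ) (hη0 : 0 < η) (hη1 : η < 1)
    (hηr : ∀ k, 2 ≤ k → k ≤ N → (ratio τ k) ^ 2 / (1 + 2 * ratio τ k) < η)
    (v w : ℕ → ℝ)
    (hv : ∀ k, 1 ≤ k → k ≤ N → 0 ≤ v k)
    (hw : ∀ k, k ≤ N → 0 ≤ w k)
    (hineq : ∀ n, 1 ≤ n → n ≤ N →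
      ∑ k ∈ Finset.Icc 1 n, dker τ η n (n - k) * (w k - w (k - 1)) ≤
        ζ * ∑ k ∈ Finset.Icc 1 (n - 1), lam ^ (n - k - 1) * w k + v n) :
    ∀ n, 1 ≤ n → n ≤ N →
      w n ≤ Real.exp (ζ * (∑ k ∈ Finset.Icc 1 n, τ k) / (1 - lam)) *
        (w 0 + ∑ k ∈ Finset.Icc 1 n, v k / bker τ k 0) := by
  have hr' : ∀ n, 1 ≤ n → n ≤ N → 0 ≤ ratio τ n := fun n _ hn => by
    rcases Nat.lt_or_ge n 2 with h | h
    · exact (ratio_of_lt_two h).ge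
    · exact (hr n h hn).1.le
  have hηr' : ∀ n, 1 ≤ n → n ≤ N → ratio τ n ^ 2 / (1 + 2 * ratio τ n) ≤ η := fun n _ hn => by
    rcases Nat.lt_or_ge n 2 with h | h
    · simpa [ratio_of_lt_two h] using hη0.le
    · exact (hηr n h hn).le
  have hb₀ n h1 h2 := (bker_zero_pos (hτ n h1 h2) (hr' n h1 h2)).le
  have hb₁ n h1 h2 := bker_one_nonpos (hτ n h1 h2) (hr' n h1 h2)
  have hq n h1 h2 := bker_zero_mul_add_bker_one_nonneg (hτ n h1 h2) (hr' n h1 h2) (hηr' n h1 h2)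
  intro n _ hn
  exact le_discreteGronwallBound_of_kernel_ineq hζ.le hlam0.le hlam1
    (fun n h1 h2 => dker_antitone (hb₀ n h1 h2) (hb₁ n h1 h2) (hq n h1 h2) hη0.le hη1.le)
    (fun n h1 h2 => dker_nonneg (hb₀ n h1 h2) (hq n h1 h2) hη0.le)
    (fun n h1 h2 => one_le_mul_bker_zero (hτ n h1 h2) (hr' n h1 h2))
    hv (hw 0 (Nat.zero_le N)) hineq n hn n le_rfl
end

section
/- Let η be a real number, let τ_1, …, τ_n > 0 be step sizes, and let φ^0, …, φ^n be real numbers with ψ^0 := φ^0 and ψ^k := φ^k − ηφ^{k−1} for k ≥ 1. Then for every 1 ≤ m ≤ n, the BDF2 operator satisfies D_2 φ^m = Σ_{k=1}^m d_{m−k}^{(m)}(ψ^k − ψ^{k−1}) + d_m^{(m)} ψ^0 = d_0^{(m)} ψ^m − Σ_{k=0}^{m−1}(d_{m−k−1}^{(m)} − d_{m−k}^{(m)}) ψ^k. -/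
/-- Kernel-recombined sequence: ψ^0 = φ^0, ψ^k = φ^k − ηφ^{k−1} for k ≥ 1. -/
noncomputable def recomb (η : ℝ) (φ : ℕ → ℝ) : ℕ → ℝ :=
  fun k => if k = 0 then φ 0 else φ k - η * φ (k - 1)

/-- Kernels with index ≥ 2 vanish. -/
lemma bker_big (τ : ℕ → ℝ) (m j : ℕ) (hj : 2 ≤ j) : bker τ m j = 0 := by
  unfold bker
  split_ifs <;> first | rfl | omega

lemma bker_one_one (τ : ℕ → ℝ) : bker τ 1 1 = 0 := by
  unfold bker; simp

/-- Shift an Icc 1 m sum to a range sum. -/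
lemma sum_shift (f : ℕ → ℝ) (m : ℕ) :
    ∑ k ∈ Finset.Icc 1 m, f k = ∑ i ∈ Finset.range m, f (i + 1) := by
  induction m with
  | zero => simp
  | succ m ih =>
    rw [Finset.sum_range_succ, ← ih, ← Finset.sum_Icc_succ_top (by omega : 1 ≤ m + 1)]

/-- D₂ reduces to two terms. -/
lemma D2_eq_s11 (τ : ℕ → ℝ) (φ : ℕ → ℝ) (m : ℕ) (hm : 1 ≤ m) :
    D2 τ φ m = bker τ m 0 * (φ m - φ (m - 1))
      + bker τ m 1 * (φ (m - 1) - φ (m - 2)) := by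
  rcases eq_or_lt_of_le hm with h1 | h2
  · subst m
    unfold D2
    simp [bker_one_one]
  · -- m ≥ 2
    have hsub : Finset.Icc (m - 1) m ⊆ Finset.Icc 1 m := by
      intro x hx; simp only [Finset.mem_Icc] at *; omega
    have hzero : ∀ x ∈ Finset.Icc 1 m, x ∉ Finset.Icc (m - 1) m →
        bker τ m (m - x) * (φ x - φ (x - 1)) = 0 := by
      intro x hx hx'
      simp only [Finset.mem_Icc] at hx hx'
      rw [bker_big τ m (m - x) (by omega), zero_mul]
    rw [D2, ← Finset.sum_subset hsub hzero]
    have hpair : Finset.Icc (m - 1) m = {m - 1, m} := by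
      ext x; simp only [Finset.mem_Icc, Finset.mem_insert, Finset.mem_singleton]; omega
    rw [hpair, Finset.sum_insert (by simp; omega), Finset.sum_singleton]
    have e1 : m - (m - 1) = 1 := by omega
    have e2 : m - 1 - 1 = m - 2 := by omega
    rw [e1, e2, Nat.sub_self]
    ring

/-- Key convolution identity for the recombined kernels. -/
lemma key1 (τ : ℕ → ℝ) (η : ℝ) (φ : ℕ → ℝ) (m : ℕ) :
    ∀ j, 1 ≤ j →
      ∑ k ∈ Finset.range (j + 1), dker τ η m (j - k) * recomb η φ k
        = bker τ m 0 * φ j + bker τ m 1 * φ (j - 1) := by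
  intro j hj
  induction j with
  | zero => omega
  | succ j ih =>
    rcases Nat.eq_zero_or_pos j with hj0 | hj1
    · subst hj0
      simp [Finset.sum_range_succ, dker, recomb]
      ring
    · rw [Finset.sum_range_succ]
      have hstep : ∑ k ∈ Finset.range (j + 1), dker τ η m (j + 1 - k) * recomb η φ k
          = η * (∑ k ∈ Finset.range (j + 1), dker τ η m (j - k) * recomb η φ k)
            + bker τ m 1 * recomb η φ j := by
        rw [Finset.mul_sum, Finset.sum_range_succ, Finset.sum_range_succ]
        have hlast : dker τ η m (j + 1 - j) = η * dker τ η m (j - j) + bker τ m 1 := by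
          rw [Nat.sub_self, show j + 1 - j = 1 by omega]
          simp [dker]
          ring
        have hterm : ∀ k < j, dker τ η m (j + 1 - k) = η * dker τ η m (j - k) := by
          intro k hk
          have h1 : j + 1 - k = (j - k - 1) + 2 := by omega
          have h2 : j - k = (j - k - 1) + 1 := by omega
          rw [h1, h2]
          simp [dker, pow_succ]
          ring
        rw [Finset.sum_congr rfl (fun k hk => by
          rw [hterm k (Finset.mem_range.mp hk), mul_assoc])]
        rw [hlast]
        ring
      rw [hstep, ih hj1]
      have hψj : recomb η φ j = φ j - η * φ (j - 1) := by
        simp [recomb, Nat.pos_iff_ne_zero.mp hj1]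
      have hψj1 : recomb η φ (j + 1) = φ (j + 1) - η * φ j := by
        simp [recomb]
      have hd0 : dker τ η m 0 = bker τ m 0 := by simp [dker]
      rw [hψj, hψj1, Nat.sub_self, hd0, Nat.add_sub_cancel]
      ring

/-- Updated BDF2 formula in terms of the recombined kernels:
D₂φ^m = Σ_{k=1}^m d_{m−k}^{(m)}(ψ^k − ψ^{k−1}) + d_m^{(m)}ψ^0
      = d_0^{(m)}ψ^m − Σ_{k=0}^{m−1}(d_{m−k−1}^{(m)} − d_{m−k}^{(m)})ψ^k. -/
theorem stmt11 (η : ℝ) (n : ℕ) (τ : ℕ → ℝ)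
    (hτ : ∀ k, 1 ≤ k → k ≤ n → 0 < τ k) (φ : ℕ → ℝ) :
    ∀ m, 1 ≤ m → m ≤ n →
      D2 τ φ m =
        (∑ k ∈ Finset.Icc 1 m, dker τ η m (m - k) * (recomb η φ k - recomb η φ (k - 1)))
          + dker τ η m m * recomb η φ 0 ∧
      D2 τ φ m =
        dker τ η m 0 * recomb η φ m
          - ∑ k ∈ Finset.range m,
              (dker τ η m (m - k - 1) - dker τ η m (m - k)) * recomb η φ k := by
  intro m hm hmn
  set d : ℕ → ℝ := dker τ η m with hd
  set ψ : ℕ → ℝ := recomb η φ with hψ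
  -- the central expression
  have hcentral : (∑ k ∈ Finset.range (m + 1), d (m - k) * ψ k)
      - (∑ k ∈ Finset.range m, d (m - 1 - k) * ψ k) = D2 τ φ m := by
    rcases eq_or_lt_of_le hm with h1 | h2
    · -- m = 1
      subst h1
      have hb1 : bker τ 1 1 = 0 := bker_one_one τ
      simp only [hd, hψ]
      rw [show (1 : ℕ) + 1 = 2 from rfl]
      rw [Finset.sum_range_succ, Finset.sum_range_succ, Finset.sum_range_zero,
        Finset.sum_range_succ, Finset.sum_range_zero]
      simp [dker, recomb, D2, bker_one_one]
      ring
    · -- m ≥ 2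
      have hA : ∑ k ∈ Finset.range (m + 1), d (m - k) * ψ k
          = bker τ m 0 * φ m + bker τ m 1 * φ (m - 1) := key1 τ η φ m m hm
      have hB : ∑ k ∈ Finset.range m, d (m - 1 - k) * ψ k
          = bker τ m 0 * φ (m - 1) + bker τ m 1 * φ (m - 1 - 1) := by
        have := key1 τ η φ m (m - 1) (by omega)
        rwa [show m - 1 + 1 = m by omega] at this
      rw [hA, hB, D2_eq_s11 τ φ m hm, show m - 1 - 1 = m - 2 by omega]
      ring
  constructor
  · -- first form
    have hIcc : (∑ k ∈ Finset.Icc 1 m, d (m - k) * (ψ k - ψ (k - 1))) + d m * ψ 0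
        = (∑ k ∈ Finset.range (m + 1), d (m - k) * ψ k)
          - (∑ k ∈ Finset.range m, d (m - 1 - k) * ψ k) := by
      have s0 : ∑ k ∈ Finset.Icc 1 m, d (m - k) * (ψ k - ψ (k - 1))
          = ∑ i ∈ Finset.range m, d (m - 1 - i) * (ψ (i + 1) - ψ i) := by
        rw [sum_shift (fun k => d (m - k) * (ψ k - ψ (k - 1))) m]
        exact Finset.sum_congr rfl (fun i _ => by
          rw [show m - (i + 1) = m - 1 - i by omega, Nat.add_sub_cancel])
      have s1 : ∑ i ∈ Finset.range m, d (m - 1 - i) * (ψ (i + 1) - ψ i)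
          = (∑ i ∈ Finset.range m, d (m - 1 - i) * ψ (i + 1))
            - ∑ i ∈ Finset.range m, d (m - 1 - i) * ψ i := by
        rw [← Finset.sum_sub_distrib]
        exact Finset.sum_congr rfl (fun i _ => by ring)
      have s2 : ∑ k ∈ Finset.range (m + 1), d (m - k) * ψ k
          = (∑ i ∈ Finset.range m, d (m - 1 - i) * ψ (i + 1)) + d m * ψ 0 := by
        rw [Finset.sum_range_succ' (fun k => d (m - k) * ψ k) m, Nat.sub_zero]
        congr 1
        exact Finset.sum_congr rfl (fun i _ => by
          rw [show m - (i + 1) = m - 1 - i by omega])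
      rw [s0, s1, s2]
      ring
    rw [← hcentral, ← hIcc]
  · -- second form
    have hAbel : d 0 * ψ m - (∑ k ∈ Finset.range m, (d (m - k - 1) - d (m - k)) * ψ k)
        = (∑ k ∈ Finset.range (m + 1), d (m - k) * ψ k)
          - (∑ k ∈ Finset.range m, d (m - 1 - k) * ψ k) := by
      rw [Finset.sum_range_succ, Nat.sub_self]
      have e2 : ∀ k, (d (m - k - 1) - d (m - k)) * ψ k
          = d (m - 1 - k) * ψ k - d (m - k) * ψ k := by
        intro k
        rw [show m - k - 1 = m - 1 - k by omega]
        ring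
      rw [Finset.sum_congr rfl (fun k _ => e2 k), Finset.sum_sub_distrib]
      ring
    rw [← hcentral, ← hAbel]
end
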